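/- Let m > 0, 0 < p < ∞, and let Φ(z) = az + b with |a| < 1. If (f_n) is a sequence of entire functions with sup_n ∫_ℂ |f_n(z)|^p e^{-p|z|^m} dA(z) < ∞ and f_n → 0 uniformly on compact subsets of ℂ, then ∫_ℂ |f_n(az+b)|^p e^{-p|z|^m} dA(z) → 0 as n → ∞. -/

import Mathlib

open MeasureTheory ENNReal Filter Topology

/-!
Fix `θ` with `‖a‖ < θ < 1`. Far from the origin `‖a z + b‖ ≤ θ ‖z‖`, so the weight
`exp (-p ‖z‖ ^ m)` is `exp (-p ‖a z + b‖ ^ m)` times the factor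
`exp (-p (‖z‖ ^ m - ‖a z + b‖ ^ m)) ≤ exp (-p (1 - θ ^ m) ‖z‖ ^ m)`, which tends to `0` at infinity.
After the substitution `w = a z + b` (Jacobian `‖a‖ ^ 2`) the part of the integral outside a large
compact set is therefore a small multiple of the uniform bound `M`, while on the compact set
`f n ∘ Φ → 0` uniformly. For `a = 0` the integral is `‖f n b‖ ^ p` times the finite integral of
the weight.
-/

theorem tendsto_rpow_sub_rpow_atTop {α : Type*} {l : Filter α} {u v : α → ℝ} {m θ : ℝ}
    (hm : 0 < m) (hθ₀ : 0 ≤ θ) (hθ : θ < 1) (hu : Tendsto u l atTop)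
    (hv : ∀ᶠ x in l, 0 ≤ v x ∧ v x ≤ θ * u x) :
    Tendsto (fun x => u x ^ m - v x ^ m) l atTop := by
  have hlow : ∀ᶠ x in l, (1 - θ ^ m) * u x ^ m ≤ u x ^ m - v x ^ m := by
    filter_upwards [hv, hu.eventually_ge_atTop 0] with x ⟨hv₀, hvθ⟩ hu₀
    have : v x ^ m ≤ θ ^ m * u x ^ m := by
      rw [← Real.mul_rpow hθ₀ hu₀]; exact Real.rpow_le_rpow hv₀ hvθ hm.le
    linarith
  exact tendsto_atTop_mono' l hlow (((tendsto_rpow_atTop hm).comp hu).const_mul_atTop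
    (sub_pos.2 (Real.rpow_lt_one hθ₀ hθ hm)))

theorem TendstoUniformlyOn.eventually_ofReal_norm_rpow_le {ι X E : Type*} [NormedAddCommGroup E]
    {l : Filter ι} {g : ι → X → E} {K : Set X} (hg : TendstoUniformlyOn g 0 l K) {p : ℝ}
    (hp : 0 < p) {η : ℝ≥0∞} (hη : 0 < η) :
    ∀ᶠ n in l, ∀ x ∈ K, ENNReal.ofReal (‖g n x‖ ^ p) ≤ η := by
  have hcont : Tendsto (fun t : ℝ => ENNReal.ofReal (t ^ p)) (𝓝 0) (𝓝 0) := by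
    simpa [Real.zero_rpow hp.ne'] using
      ENNReal.tendsto_ofReal (Real.continuousAt_rpow_const 0 p (Or.inr hp.le)).tendsto
  obtain ⟨δ, hδ, hsmall⟩ := Metric.eventually_nhds_iff.1 (hcont.eventually (ge_mem_nhds hη))
  filter_upwards [Metric.tendstoUniformlyOn_iff.1 hg δ hδ] with n hn x hx
  exact hsmall (by simpa using hn x hx)

theorem tendsto_lintegral_zero_of_le_mul_of_tendsto_cocompact {ι X : Type*} {l : Filter ι}
    [TopologicalSpace X] [T2Space X] [MeasurableSpace X] [OpensMeasurableSpace X]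
    {μ : Measure X} [IsFiniteMeasureOnCompacts μ] {F G : ι → X → ℝ≥0∞} {ρ : X → ℝ≥0∞}
    {C : ℝ≥0∞} (hC : C ≠ ∞) (hG : ∀ n, ∫⁻ x, G n x ∂μ ≤ C)
    (hρ : Tendsto ρ (cocompact X) (𝓝 0)) (hFG : ∀ n x, F n x ≤ ρ x * G n x)
    (hF : ∀ K, IsCompact K → ∀ η > 0, ∀ᶠ n in l, ∀ x ∈ K, F n x ≤ η) :
    Tendsto (fun n => ∫⁻ x, F n x ∂μ) l (𝓝 0) := by
  rw [ENNReal.tendsto_nhds_zero]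
  intro ε hε
  obtain ⟨κ, hκ, hκC⟩ := ENNReal.exists_nnreal_pos_mul_lt hC (ENNReal.half_pos hε.ne').ne'
  obtain ⟨K, hK, hρK⟩ :=
    hasBasis_cocompact.eventually_iff.1 (hρ.eventually (ge_mem_nhds (coe_pos.2 hκ)))
  obtain ⟨η, hη, hηK⟩ :=
    ENNReal.exists_nnreal_pos_mul_lt (hK.measure_lt_top (μ := μ)).ne
      (ENNReal.half_pos hε.ne').ne'
  filter_upwards [hF K hK η (coe_pos.2 hη)] with n hn
  have hsplit : ∀ x, F n x ≤ K.indicator (fun _ => (η : ℝ≥0∞)) x + κ * G n x := by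
    intro x
    by_cases hx : x ∈ K
    · simpa [hx] using le_add_right (hn x hx)
    · simpa [hx] using (hFG n x).trans (mul_le_mul_left (hρK hx) _)
  calc ∫⁻ x, F n x ∂μ ≤ ∫⁻ x, K.indicator (fun _ => (η : ℝ≥0∞)) x + κ * G n x ∂μ :=
        lintegral_mono hsplit
    _ = η * μ K + κ * ∫⁻ x, G n x ∂μ := by
        rw [lintegral_add_left (measurable_const.indicator hK.measurableSet),
          lintegral_indicator_const hK.measurableSet, lintegral_const_mul' _ _ coe_ne_top]
    _ ≤ ε / 2 + ε / 2 := add_le_add hηK.le ((mul_le_mul_right (hG n) _).trans hκC.le)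
    _ = ε := ENNReal.add_halves ε

theorem tendsto_lintegral_ofReal_mul_of_integrable {ι X : Type*} {l : Filter ι}
    [MeasurableSpace X] {μ : Measure X} {c : ι → ℝ} {w : X → ℝ} (hc₀ : ∀ n, 0 ≤ c n)
    (hc : Tendsto (fun n => ENNReal.ofReal (c n)) l (𝓝 0)) (hw : Integrable w μ) :
    Tendsto (fun n => ∫⁻ x, ENNReal.ofReal (c n * w x) ∂μ) l (𝓝 0) := by
  have := ENNReal.Tendsto.mul_const hc (.inr hw.lintegral_lt_top.ne)
  rw [zero_mul] at this
  refine this.congr fun n => ?_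
  simp_rw [← lintegral_const_mul' _ _ ofReal_ne_top, ← ENNReal.ofReal_mul (hc₀ n)]

theorem integrable_exp_neg_mul_norm_rpow {E : Type*} [NormedAddCommGroup E] [NormedSpace ℝ E]
    [FiniteDimensional ℝ E] [Nontrivial E] [MeasurableSpace E] [BorelSpace E] (μ : Measure E)
    [μ.IsAddHaarMeasure] {p m : ℝ} (hp : 0 < p) (hm : 0 < m) :
    Integrable (fun x : E => Real.exp (-(p * ‖x‖ ^ m))) μ := by
  rw [integrable_fun_norm_addHaar μ (f := fun t => Real.exp (-(p * t ^ m)))]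
  refine (integrableOn_rpow_mul_exp_neg_mul_rpow (s := (Module.finrank ℝ E - 1 : ℕ))
    (neg_one_lt_zero.trans_le (Nat.cast_nonneg _)) hm hp).congr_fun (fun y _ => ?_)
    measurableSet_Ioi
  simp [Real.rpow_natCast, neg_mul]

theorem Complex.lintegral_comp_mul_add {a : ℂ} (ha : a ≠ 0) (b : ℂ) (g : ℂ → ℝ≥0∞) :
    ∫⁻ z, g (a * z + b) = ENNReal.ofReal (‖a‖ ^ 2)⁻¹ * ∫⁻ z, g z := by
  have hdet : LinearMap.det (LinearMap.mulLeft ℝ a) = ‖a‖ ^ 2 := by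
    rw [← Complex.normSq_eq_norm_sq, ← Algebra.norm_complex_apply, Algebra.norm_apply]; rfl
  have hmap : Measure.map (a * ·) volume = ENNReal.ofReal (‖a‖ ^ 2)⁻¹ • (volume : Measure ℂ) := by
    have := Measure.map_linearMap_addHaar_eq_smul_addHaar volume (f := LinearMap.mulLeft ℝ a)
      (by rw [hdet]; positivity)
    rwa [hdet, abs_of_nonneg (by positivity)] at this
  calc ∫⁻ z, g (a * z + b) = ∫⁻ w, g (w + b) ∂(Measure.map (a * ·) volume) :=
        (lintegral_map_equiv (fun w => g (w + b))
          (Homeomorph.mulLeft₀ a ha).toMeasurableEquiv).symm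
    _ = _ := by
        rw [hmap, lintegral_smul_measure, lintegral_add_right_eq_self (fun w => g w) b,
          smul_eq_mul]

theorem Complex.tendsto_norm_rpow_sub_norm_mul_add_rpow_cocompact {a : ℂ} (ha : ‖a‖ < 1) (b : ℂ)
    {m : ℝ} (hm : 0 < m) :
    Tendsto (fun z : ℂ => ‖z‖ ^ m - ‖a * z + b‖ ^ m) (cocompact ℂ) atTop := by
  obtain ⟨θ, haθ, hθ⟩ := exists_between ha
  refine tendsto_rpow_sub_rpow_atTop hm ((norm_nonneg a).trans haθ.le) hθ
    tendsto_norm_cocompact_atTop ?_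
  filter_upwards [tendsto_norm_cocompact_atTop.eventually_ge_atTop (‖b‖ / (θ - ‖a‖))] with z hz
  have hb : ‖b‖ ≤ (θ - ‖a‖) * ‖z‖ := by rwa [div_le_iff₀' (sub_pos.2 haθ)] at hz
  refine ⟨norm_nonneg _, ?_⟩
  calc ‖a * z + b‖ ≤ ‖a‖ * ‖z‖ + ‖b‖ := (norm_add_le _ _).trans_eq (by rw [norm_mul])
    _ ≤ θ * ‖z‖ := by linarith

theorem compact_composition_affine_fock_general (m p : ℝ) (hm : 0 < m) (hp : 0 < p)
    (a b : ℂ) (ha : ‖a‖ < 1) (f : ℕ → ℂ → ℂ)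
    (M : ℝ≥0∞) (hM : M ≠ ⊤)
    (hbd : ∀ n, ∫⁻ z : ℂ,
      ENNReal.ofReal (‖f n z‖ ^ p * Real.exp (-(p * ‖z‖ ^ m))) ≤ M)
    (hconv : TendstoLocallyUniformly f 0 atTop) :
    Tendsto (fun n => ∫⁻ z : ℂ,
        ENNReal.ofReal (‖f n (a * z + b)‖ ^ p *
          Real.exp (-(p * ‖z‖ ^ m))))
      atTop (nhds 0) := by
  rcases eq_or_ne a 0 with rfl | ha₀
  · simp only [zero_mul, zero_add]
    refine tendsto_lintegral_ofReal_mul_of_integrable (fun n => by positivity) ?_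
      (integrable_exp_neg_mul_norm_rpow volume hp hm)
    exact ENNReal.tendsto_nhds_zero.2 fun η hη => by
      simpa using (tendstoLocallyUniformly_iff_forall_isCompact.1 hconv {b}
        isCompact_singleton).eventually_ofReal_norm_rpow_le hp hη
  refine tendsto_lintegral_zero_of_le_mul_of_tendsto_cocompact
    (G := fun n z => ENNReal.ofReal (‖f n (a * z + b)‖ ^ p * Real.exp (-(p * ‖a * z + b‖ ^ m))))
    (ρ := fun z => ENNReal.ofReal (Real.exp (-(p * (‖z‖ ^ m - ‖a * z + b‖ ^ m)))))
    (mul_ne_top (ofReal_ne_top (r := (‖a‖ ^ 2)⁻¹)) hM) (fun n => ?_) ?_ (fun n z => ?_)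
    (fun K hK η hη => ?_)
  · rw [Complex.lintegral_comp_mul_add ha₀ b
      (fun w => ENNReal.ofReal (‖f n w‖ ^ p * Real.exp (-(p * ‖w‖ ^ m))))]
    gcongr
    exact hbd n
  · simpa using ENNReal.tendsto_ofReal (Real.tendsto_exp_neg_atTop_nhds_zero.comp
      ((Complex.tendsto_norm_rpow_sub_norm_mul_add_rpow_cocompact ha b hm).const_mul_atTop hp))
  · rw [← ENNReal.ofReal_mul (Real.exp_nonneg _), mul_left_comm, ← Real.exp_add]
    apply le_of_eq
    congr 3
    ring
  · have hcomp := tendstoLocallyUniformly_iff_forall_isCompact.1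
      (hconv.comp (a * · + b) (by fun_prop)) K hK
    filter_upwards [hcomp.eventually_ofReal_norm_rpow_le hp hη] with n hn z hz
    refine le_trans (ENNReal.ofReal_le_ofReal ?_) (hn z hz)
    exact mul_le_of_le_one_right (by positivity)
      (Real.exp_le_one_iff.2 (neg_nonpos.2 (by positivity)))

theorem compact_composition_affine_fock (m p : ℝ) (hm : 0 < m) (hp : 0 < p)
    (a b : ℂ) (ha : ‖a‖ < 1) (f : ℕ → ℂ → ℂ)
    (hf : ∀ n, Differentiable ℂ (f n)) (M : ℝ≥0∞) (hM : M ≠ ⊤)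
    (hbd : ∀ n, ∫⁻ z : ℂ,
      ENNReal.ofReal (‖f n z‖ ^ p * Real.exp (-(p * ‖z‖ ^ m))) ≤ M)
    (hconv : TendstoLocallyUniformly f 0 atTop) :
    Tendsto (fun n => ∫⁻ z : ℂ,
        ENNReal.ofReal (‖f n (a * z + b)‖ ^ p *
          Real.exp (-(p * ‖z‖ ^ m))))
      atTop (nhds 0) :=
  compact_composition_affine_fock_general m p hm hp a b ha f M hM hbd hconv
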